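/- arXiv:2408.17368 — 2 statements merged into one kernel-verified Lean document; each statement's English description precedes it below -/
import Mathlib

section
/- The lookahead refinement iteration reaches a fixpoint after at most |Q| iterations: for the sequence of verdict functions λ_i defined by the lookahead refinement operator on a VTS with state set Q, λ_{|Q|} = λ_{|Q|+k} for all k ≥ 0. -/
/-- A transition system (S, Act, I, T). -/
structure TS (S A : Type) where
  init : Set S
  rel : Set (S × A × S)

namespace TS

variable {S A : Type}

/-- Post(X, As): the set of As-successors of X. -/
def post (M : TS S A) (X : Set S) (As : Set A) : Set S :=
  {s' | ∃ s ∈ X, ∃ a ∈ As, (s, a, s') ∈ M.rel}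

/-- The set of w-reachable states: reach(ε) = I, reach(w·a) = Post(reach(w), {a}). -/
def reach (M : TS S A) (w : List A) : Set S :=
  w.foldl (fun X a => M.post X {a}) M.init

/-- The language of a TS: the set of accepted words, i.e. those with reach(w) ≠ ∅. -/
def lang (M : TS S A) : Set (List A) := {w | M.reach w ≠ ∅}

end TS

/-- A verdict transition system (VTS): a TS together with a verdict function. -/
structure VTS (Q A Λ : Type) extends TS Q A where
  verdict : Q → Λ

variable {Q A Λ : Type} [CompleteLattice Λ]

/-- The verdict yielded by a VTS for a trace w: the join of the verdicts of
the w-reachable states. -/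
def VTS.yield (V : VTS Q A Λ) (w : List A) : Λ :=
  sSup (V.verdict '' V.toTS.reach w)

open Classical in
/-- One step of the lookahead refinement operator: for a monotonic state q
(all successors have verdicts ⊑ λ(q)), the new verdict is the join of the
f-verdicts of the successors of q; otherwise it stays λ(q). -/
noncomputable def refineStep (V : VTS Q A Λ) (f : Q → Λ) : Q → Λ :=
  fun q =>
    if ∀ q' ∈ V.toTS.post {q} Set.univ, V.verdict q' ≤ V.verdict q then
      sSup (f '' V.toTS.post {q} Set.univ)
    else V.verdict q

/-- The lookahead-refined verdict functions: λ₀ = λ, λ_{i+1} = refineStep λ_i. -/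
noncomputable def lam (V : VTS Q A Λ) (i : ℕ) : Q → Λ :=
  (refineStep V)^[i] V.verdict

/-- The lookahead-refined VTS: same transition structure, verdicts λ_{|Q|}. -/
noncomputable def lookahead [Fintype Q] (V : VTS Q A Λ) : VTS Q A Λ :=
  { toTS := V.toTS, verdict := lam V (Fintype.card Q) }

/-- q is monotonic: all successors have verdict ≤ verdict q. -/
def Cmono (V : VTS Q A Λ) (q : Q) : Prop :=
  ∀ q' ∈ V.toTS.post {q} Set.univ, V.verdict q' ≤ V.verdict q

open Classical in
/-- The refinement step relation: successors for monotonic states, self-loop otherwise. -/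
def Rstep (V : VTS Q A Λ) (q q' : Q) : Prop :=
  if Cmono V q then q' ∈ V.toTS.post {q} Set.univ else q' = q

/-- Paths of length m in the Rstep graph. -/
def npath (V : VTS Q A Λ) : ℕ → Q → Q → Prop
  | 0, q, e => e = q
  | (m+1), q, e => ∃ q', Rstep V q q' ∧ npath V m q' e

lemma refineStep_eq_pos (V : VTS Q A Λ) (f : Q → Λ) (q : Q) (h : Cmono V q) :
    refineStep V f q = sSup (f '' V.toTS.post {q} Set.univ) := by
  simp only [refineStep]; exact if_pos h

lemma refineStep_eq_neg (V : VTS Q A Λ) (f : Q → Λ) (q : Q) (h : ¬ Cmono V q) :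
    refineStep V f q = V.verdict q := by
  simp only [refineStep]; exact if_neg h

lemma rstep_pos (V : VTS Q A Λ) (q q' : Q) (h : Cmono V q) :
    Rstep V q q' ↔ q' ∈ V.toTS.post {q} Set.univ := by
  simp only [Rstep]; rw [if_pos h]

lemma rstep_neg (V : VTS Q A Λ) (q q' : Q) (h : ¬ Cmono V q) :
    Rstep V q q' ↔ q' = q := by
  simp only [Rstep]; rw [if_neg h]

lemma npath_of_not (V : VTS Q A Λ) (q : Q) (h : ¬ Cmono V q) :
    ∀ m e, npath V m q e ↔ e = q := by
  intro m
  induction m with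
  | zero => intro e; exact Iff.rfl
  | succ m ih =>
    intro e
    constructor
    · rintro ⟨q', hR, hp⟩
      rw [rstep_neg V q q' h] at hR
      subst hR
      exact (ih e).mp hp
    · intro he
      exact ⟨q, (rstep_neg V q q h).mpr rfl, (ih e).mpr he⟩

lemma lam_succ (V : VTS Q A Λ) (m : ℕ) :
    lam V (m+1) = refineStep V (lam V m) := by
  simp only [lam, Function.iterate_succ_apply']

lemma lam_eq (V : VTS Q A Λ) (m : ℕ) : ∀ q : Q,
    lam V m q = sSup (V.verdict '' {e | npath V m q e}) := by
  induction m with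
  | zero =>
    intro q
    have h1 : {e | npath V 0 q e} = {q} := by
      ext e
      simp only [Set.mem_setOf_eq, Set.mem_singleton_iff]
      exact Iff.rfl
    simp [lam, h1]
  | succ m ih =>
    intro q
    rw [lam_succ]
    by_cases h : Cmono V q
    · rw [refineStep_eq_pos V _ q h]
      apply le_antisymm
      · apply sSup_le
        rintro _ ⟨q', hq', rfl⟩
        rw [ih q']
        apply sSup_le
        rintro _ ⟨e, he, rfl⟩
        exact le_sSup ⟨e, ⟨q', (rstep_pos V q q' h).mpr hq', he⟩, rfl⟩
      · apply sSup_le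
        rintro _ ⟨e, ⟨q', hR, hp⟩, rfl⟩
        rw [rstep_pos V q q' h] at hR
        have h4 : V.verdict e ≤ lam V m q' := by
          rw [ih q']; exact le_sSup ⟨e, hp, rfl⟩
        exact le_trans h4 (le_sSup ⟨q', hR, rfl⟩)
    · rw [refineStep_eq_neg V _ q h]
      have h1 : {e | npath V (m+1) q e} = {q} := by
        ext e; simp [npath_of_not V q h]
      simp [h1]

lemma refineStep_mono (V : VTS Q A Λ) {f g : Q → Λ} (h : f ≤ g) :
    refineStep V f ≤ refineStep V g := by
  intro q
  by_cases hc : Cmono V q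
  · rw [refineStep_eq_pos V _ q hc, refineStep_eq_pos V _ q hc]
    apply sSup_le
    rintro _ ⟨x, hx, rfl⟩
    exact le_trans (h x) (le_sSup ⟨x, hx, rfl⟩)
  · rw [refineStep_eq_neg V _ q hc, refineStep_eq_neg V _ q hc]

lemma lam_succ_le (V : VTS Q A Λ) (i : ℕ) : lam V (i+1) ≤ lam V i := by
  induction i with
  | zero =>
    intro q
    by_cases hc : Cmono V q
    · rw [lam_succ, refineStep_eq_pos V _ q hc]
      apply sSup_le
      rintro _ ⟨x, hx, rfl⟩
      exact hc x hx
    · rw [lam_succ, refineStep_eq_neg V _ q hc]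
      exact le_refl _
  | succ i ih =>
    calc lam V (i+1+1) = refineStep V (lam V (i+1)) := lam_succ V (i+1)
      _ ≤ refineStep V (lam V i) := refineStep_mono V ih
      _ = lam V (i+1) := (lam_succ V i).symm

lemma lam_antitone (V : VTS Q A Λ) {i j : ℕ} (h : i ≤ j) : lam V j ≤ lam V i := by
  induction j with
  | zero => simp_all
  | succ j ih =>
    rcases Nat.lt_or_ge i (j+1) with hlt | hge
    · exact le_trans (lam_succ_le V j) (ih (Nat.lt_succ_iff.mp hlt))
    · have : i = j + 1 := le_antisymm h hge
      subst this; exact le_refl _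

lemma npath_iff_fn (V : VTS Q A Λ) (m : ℕ) : ∀ q e : Q, npath V m q e ↔
    ∃ p : ℕ → Q, p 0 = q ∧ p m = e ∧ ∀ i < m, Rstep V (p i) (p (i+1)) := by
  induction m with
  | zero =>
    intro q e
    constructor
    · intro h
      exact ⟨fun _ => q, rfl, (show e = q from h).symm,
        fun i hi => absurd hi (Nat.not_lt_zero i)⟩
    · rintro ⟨p, h0, hm, _⟩
      show e = q
      rw [← h0, ← hm]
  | succ m ih =>
    intro q e
    constructor
    · rintro ⟨q', hR, hp⟩
      obtain ⟨p, h0, hm', hstep⟩ := (ih q' e).mp hp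
      refine ⟨fun i => if i = 0 then q else p (i - 1), if_pos rfl, ?_, ?_⟩
      · show (if m + 1 = 0 then q else p (m + 1 - 1)) = e
        rw [if_neg (Nat.succ_ne_zero m)]
        simpa using hm'
      · intro i hi
        show Rstep V (if i = 0 then q else p (i - 1))
          (if i + 1 = 0 then q else p (i + 1 - 1))
        rw [if_neg (Nat.succ_ne_zero i)]
        rcases Nat.eq_zero_or_pos i with rfl | hpos
        · rw [if_pos rfl]
          simpa [h0] using hR
        · have h1 : i ≠ 0 := by omega
          rw [if_neg h1]
          have h2 : i - 1 < m := by omega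
          have h3 := hstep (i - 1) h2
          have heq : i - 1 + 1 = i := by omega
          rw [heq] at h3
          have heq2 : i + 1 - 1 = i := rfl
          rw [heq2]
          exact h3
    · rintro ⟨p, h0, hm', hstep⟩
      refine ⟨p 1, by rw [← h0]; exact hstep 0 (Nat.succ_pos m), ?_⟩
      exact (ih (p 1) e).mpr
        ⟨fun i => p (i+1), rfl, hm', fun i hi => hstep (i+1) (Nat.succ_lt_succ hi)⟩

/-- Pumping: a path of length ≥ |Q| can be lengthened. -/
lemma npath_pump [Fintype Q] (V : VTS Q A Λ) {m : ℕ} {q e : Q}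
    (h : npath V m q e) (hm : Fintype.card Q ≤ m) :
    ∃ m', m < m' ∧ npath V m' q e := by
  obtain ⟨p, h0, hme, hstep⟩ := (npath_iff_fn V m q e).mp h
  have hcard : Fintype.card Q < Fintype.card (Fin (m+1)) := by
    simp [Fintype.card_fin]; omega
  obtain ⟨a, b, hab, heq⟩ := Fintype.exists_ne_map_eq_of_card_lt
    (fun i : Fin (m+1) => p i.1) hcard
  wlog hlt : (a : ℕ) < (b : ℕ) generalizing a b
  · refine this b a hab.symm heq.symm ?_
    rcases Nat.lt_or_ge (b:ℕ) (a:ℕ) with h'' | h''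
    · exact h''
    · exact absurd (Fin.ext (le_antisymm h'' (by omega))) hab
  set i := (a : ℕ)
  set k := (b : ℕ)
  have hk : k ≤ m := Nat.lt_succ_iff.mp b.2
  set c := k - i with hc
  have hc1 : 1 ≤ c := by omega
  have hpik : p i = p k := heq
  refine ⟨m + c, by omega, ?_⟩
  rw [npath_iff_fn]
  refine ⟨fun t => if t < k then p t else p (t - c), ?_, ?_, ?_⟩
  · show (if 0 < k then p 0 else p (0 - c)) = q
    rw [if_pos (by omega : 0 < k)]; exact h0
  · show (if m + c < k then p (m + c) else p (m + c - c)) = e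
    rw [if_neg (by omega : ¬ (m + c < k))]
    have hmc : m + c - c = m := by omega
    rw [hmc]; exact hme
  · intro t ht
    show Rstep V (if t < k then p t else p (t - c))
      (if t + 1 < k then p (t + 1) else p (t + 1 - c))
    rcases Nat.lt_or_ge (t+1) k with h1 | h1
    · rw [if_pos (by omega : t < k), if_pos h1]
      exact hstep t (by omega)
    rcases Nat.eq_or_lt_of_le h1 with h2 | h2
    · rw [if_pos (by omega : t < k), if_neg (by omega : ¬ t + 1 < k)]
      have hik : t + 1 - c = i := by omega
      rw [hik, hpik]
      have hkt : k = t + 1 := h2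
      rw [hkt]
      exact hstep t (by omega)
    · rw [if_neg (by omega : ¬ t < k), if_neg (by omega : ¬ t + 1 < k)]
      have h3 : t + 1 - c = (t - c) + 1 := by omega
      rw [h3]
      exact hstep (t - c) (by omega)

lemma lam_card_le [Fintype Q] (V : VTS Q A Λ) :
    lam V (Fintype.card Q) ≤ lam V (Fintype.card Q + 1) := by
  intro q
  rw [lam_eq]
  apply sSup_le
  rintro _ ⟨e, he, rfl⟩
  obtain ⟨m', hm', hp⟩ := npath_pump V he (le_refl _)
  calc V.verdict e ≤ lam V m' q := by
        rw [lam_eq]; exact le_sSup ⟨e, hp, rfl⟩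
    _ ≤ lam V (Fintype.card Q + 1) q := lam_antitone V (by omega) q

/-- the lookahead refinement iteration reaches a fixpoint after
at most |Q| iterations: λ_{|Q|} = λ_{|Q|+k} for all k ≥ 0. -/
theorem stmt_13 [Fintype Q] (V : VTS Q A Λ) :
    ∀ k : ℕ, lam V (Fintype.card Q) = lam V (Fintype.card Q + k) := by
  have hfix : lam V (Fintype.card Q + 1) = lam V (Fintype.card Q) :=
    le_antisymm (lam_succ_le V _) (lam_card_le V)
  intro k
  induction k with
  | zero => rfl
  | succ k ih =>
    have h1 : Fintype.card Q + (k + 1) = (Fintype.card Q + k) + 1 := by omega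
    rw [h1, lam_succ, ← ih, ← lam_succ, hfix]
end

section
/- Correctness of the bounded-delay transformation (Theorem 3): for a VTS V and delay bound B, the VTS V' with the same transition structure but verdict function λ'(q) = ⊔_{q' ∈ X_B(q)} λ(q') (where X_B(q) is the set of states reachable from q in at most B transitions) satisfies (i) L(V') = {(w_i)_{i=1}^{n−Δ} : (w_i)_{i=1}^n ∈ L(V), 0 ≤ Δ ≤ B}, and (ii) for every w' ∈ L(V'), λ̂'(w') = ⊔{λ̂(w) : w ∈ L(V), ∃ 0 ≤ Δ ≤ B with (w_i)_{i=1}^{|w|−Δ} = w'}. -/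
variable {Q A Λ : Type} [CompleteLattice Λ]

/-- X_i(q): states reachable from q in at most i transitions:
X₀(q) = {q}, X_{i+1}(q) = X_i(q) ∪ Post(X_i(q), Act). -/
def xiter (V : VTS Q A Λ) : ℕ → Q → Set Q
  | 0, q => {q}
  | i + 1, q => xiter V i q ∪ V.toTS.post (xiter V i q) Set.univ

/-- The bounded-delay transformation for delay bound B: same transition
structure, verdicts λ'(q) = ⊔_{q' ∈ X_B(q)} λ(q'). -/
def delayVTS (V : VTS Q A Λ) (B : ℕ) : VTS Q A Λ :=
  { toTS := V.toTS, verdict := fun q => sSup (V.verdict '' xiter V B q) }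

section Aux

variable {S : Type}

lemma TS.reach_append (M : TS S A) (w u : List A) :
    M.reach (w ++ u) = u.foldl (fun X a => M.post X {a}) (M.reach w) := by
  simp [TS.reach, List.foldl_append]

lemma TS.post_empty (M : TS S A) (As : Set A) : M.post ∅ As = ∅ := by
  ext s; simp [TS.post]

lemma TS.foldl_empty (M : TS S A) (u : List A) :
    u.foldl (fun X a => M.post X {a}) ∅ = ∅ := by
  induction u with
  | nil => rfl
  | cons a u ih => simpa [TS.post_empty] using ih

lemma TS.mem_foldl (M : TS S A) (u : List A) (X : Set S) (r : S) :
    r ∈ u.foldl (fun Y a => M.post Y {a}) X ↔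
      ∃ q ∈ X, r ∈ u.foldl (fun Y a => M.post Y {a}) {q} := by
  induction u generalizing X with
  | nil => simp
  | cons a u ih =>
    simp only [List.foldl_cons]
    rw [ih]
    constructor
    · rintro ⟨p, hp, hr⟩
      obtain ⟨q, hq, a', ha', hrel⟩ := hp
      refine ⟨q, hq, (ih _).2 ⟨p, ⟨q, rfl, a', ha', hrel⟩, hr⟩⟩
    · rintro ⟨q, hq, hr⟩
      rw [ih] at hr
      obtain ⟨p, hp, hr⟩ := hr
      obtain ⟨q', hq', a', ha', hrel⟩ := hp
      cases hq'
      exact ⟨p, ⟨q, hq, a', ha', hrel⟩, hr⟩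

lemma mem_xiter (V : VTS Q A Λ) (i : ℕ) (q r : Q) :
    r ∈ xiter V i q ↔
      ∃ u : List A, u.length ≤ i ∧
        r ∈ u.foldl (fun Y a => V.toTS.post Y {a}) ({q} : Set Q) := by
  induction i generalizing r with
  | zero =>
    constructor
    · intro h; exact ⟨[], le_refl _, h⟩
    · rintro ⟨u, hu, hr⟩
      rw [Nat.le_zero, List.length_eq_zero_iff] at hu
      subst hu; exact hr
  | succ i ih =>
    constructor
    · rintro (h | h)
      · obtain ⟨u, hu, hr⟩ := ih r |>.1 h
        exact ⟨u, hu.trans (Nat.le_succ _), hr⟩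
      · obtain ⟨p, hp, a, -, hrel⟩ := h
        obtain ⟨u, hu, hpu⟩ := ih p |>.1 hp
        refine ⟨u ++ [a], by simpa using Nat.succ_le_succ hu, ?_⟩
        rw [List.foldl_append]
        exact ⟨p, hpu, a, rfl, hrel⟩
    · rintro ⟨u, hu, hr⟩
      rcases Nat.lt_or_ge u.length (i + 1) with h | h
      · exact Or.inl ((ih r).2 ⟨u, Nat.lt_succ_iff.1 h, hr⟩)
      · have hlen : u.length = i + 1 := le_antisymm hu h
        rcases u.eq_nil_or_concat with rfl | ⟨u', a, rfl⟩
        · simp at hlen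
        · simp only [List.concat_eq_append, List.foldl_append, List.foldl_cons] at hr
          obtain ⟨p, hp, a', -, hrel⟩ := hr
          have hu' : u'.length ≤ i := by
            simp [List.concat_eq_append] at hlen; omega
          exact Or.inr ⟨p, (ih p).2 ⟨u', hu', hp⟩, a', trivial, hrel⟩

end Aux

/-- Theorem 3, correctness of the bounded-delay transformation:
(i) L(V') = {(w_i)_{i=1}^{n−Δ} : (w_i)_{i=1}^n ∈ L(V), 0 ≤ Δ ≤ B}, and
(ii) for every w' ∈ L(V'),
λ̂'(w') = ⊔{λ̂(w) : w ∈ L(V), ∃ 0 ≤ Δ ≤ B with (w_i)_{i=1}^{|w|−Δ} = w'}. -/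
theorem stmt_17 (V : VTS Q A Λ) (B : ℕ) :
    (delayVTS V B).toTS.lang
      = {w' | ∃ w ∈ V.toTS.lang, ∃ Δ ≤ B, w.take (w.length - Δ) = w'} ∧
    ∀ w' ∈ (delayVTS V B).toTS.lang,
      (delayVTS V B).yield w'
        = sSup {v | ∃ w ∈ V.toTS.lang, (∃ Δ ≤ B, w.take (w.length - Δ) = w') ∧
            v = V.yield w} := by
  constructor
  · ext w'
    simp only [Set.mem_setOf_eq]
    constructor
    · intro h
      exact ⟨w', h, 0, Nat.zero_le _, by simp⟩
    · rintro ⟨w, hw, Δ, hΔ, htake⟩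
      show V.toTS.reach w' ≠ ∅
      intro hemp
      apply hw
      have hsplit := List.take_append_drop (w.length - Δ) w
      rw [htake] at hsplit
      calc V.toTS.reach w = V.toTS.reach (w' ++ w.drop (w.length - Δ)) := by rw [hsplit]
        _ = (w.drop (w.length - Δ)).foldl (fun X a => V.toTS.post X {a}) (V.toTS.reach w') :=
            V.toTS.reach_append _ _
        _ = ∅ := by rw [hemp]; exact V.toTS.foldl_empty _
  · intro w' _
    apply le_antisymm
    · apply sSup_le
      rintro v ⟨q, hq, rfl⟩
      apply sSup_le
      rintro x ⟨r, hr, rfl⟩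
      rw [mem_xiter] at hr
      obtain ⟨u, hu, hru⟩ := hr
      have hr' : r ∈ V.toTS.reach (w' ++ u) := by
        rw [TS.reach_append, TS.mem_foldl]
        exact ⟨q, hq, hru⟩
      have hmem : V.yield (w' ++ u) ∈ {v | ∃ w ∈ V.toTS.lang,
          (∃ Δ ≤ B, w.take (w.length - Δ) = w') ∧ v = V.yield w} := by
        refine ⟨w' ++ u, ?_, ⟨u.length, hu, ?_⟩, rfl⟩
        · intro h; rw [Set.eq_empty_iff_forall_notMem] at h; exact h r hr'
        · simp
      calc V.verdict r ≤ V.yield (w' ++ u) := le_sSup ⟨r, hr', rfl⟩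
        _ ≤ _ := le_sSup hmem
    · apply sSup_le
      rintro v ⟨w, _, ⟨Δ, hΔ, htake⟩, rfl⟩
      apply sSup_le
      rintro x ⟨r, hr, rfl⟩
      have hwu : w' ++ w.drop (w.length - Δ) = w := by
        rw [← htake]; exact List.take_append_drop _ _
      have hul : (w.drop (w.length - Δ)).length ≤ B := by
        rw [List.length_drop]; omega
      rw [← hwu, TS.reach_append, TS.mem_foldl] at hr
      obtain ⟨q, hq, hru⟩ := hr
      calc V.verdict r ≤ (delayVTS V B).verdict q :=
            le_sSup ⟨r, (mem_xiter V B q r).2 ⟨_, hul, hru⟩, rfl⟩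
        _ ≤ _ := le_sSup (show (delayVTS V B).verdict q ∈
            (delayVTS V B).verdict '' (delayVTS V B).toTS.reach w' from ⟨q, hq, rfl⟩)
end
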